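/- If m = 2 then G₂ is a complete bipartite graph and its diameter is 2; if m ≥ 3 then the diameter of G₂ is 3. -/

import Mathlib

open Finset

abbrev NN (m : ℕ) (p : Fin m → ℕ) : ℕ := ∏ i, p i

abbrev Vtx (m : ℕ) (p : Fin m → ℕ) : Type :=
  {x : ZMod (NN m p) // x ≠ 0 ∧ ¬ IsUnit x}

/-- The induced subgraph `G₂` of the comaximal graph of `ℤ/nℤ` on nonzero nonunits. -/
def G2 (m : ℕ) (p : Fin m → ℕ) : SimpleGraph (Vtx m p) where
  Adj x y := x ≠ y ∧ Ideal.span ({x.1, y.1} : Set (ZMod (NN m p))) = ⊤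
  symm := by
    constructor
    rintro x y ⟨hxy, h⟩
    exact ⟨hxy.symm, by rwa [Set.pair_comm]⟩
  loopless := by constructor; rintro x ⟨h, -⟩; exact h rfl

/-- The zero-set of `x`: indices `i` where the image of `x` in `ℤ/p_iℤ` is zero. -/
def Z (m : ℕ) (p : Fin m → ℕ) (x : ZMod (NN m p)) : Finset (Fin m) :=
  Finset.univ.filter fun i =>
    (ZMod.castHom (Finset.dvd_prod_of_mem p (Finset.mem_univ i)) (ZMod (p i))) x = 0

/-- The class `X_S` of vertices of `G₂` with zero-set `S`. -/
def XS (m : ℕ) (p : Fin m → ℕ) (S : Finset (Fin m)) : Set (Vtx m p) :=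
  {x | Z m p x.1 = S}

/-- Diameter: the maximum over all pairs of vertices of the graph distance. -/
noncomputable def gdiam {V : Type*} (G : SimpleGraph V) : ℕ :=
  sSup {d | ∃ x y, G.dist x y = d}

/-!
By the Chinese remainder theorem `ℤ/nℤ ≃ ∏ ℤ/p_iℤ`, what matters about an element is its
zero set `Z x`: the vertices are the elements with `∅ ≠ Z x ≠ univ`, and two vertices are adjacent
iff their zero sets are disjoint. Every such zero set is realised, so `u` and `v` have a common
neighbour (with zero set `(Z u ∪ Z v)ᶜ`) iff `Z u ∪ Z v ≠ univ`; otherwise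
`u - (Z u)ᶜ - (Z v)ᶜ - v` is a path, so the diameter is at most 3.
For `m = 2` the zero sets are `{0}` and `{1}`, which gives the bipartition, and since `p 1 > 2`
there are two distinct vertices with zero set `{0}`, at distance 2.
For `m ≥ 3` the vertices with zero sets `{0}ᶜ` and `{1}ᶜ` share the zero `2` while their zero
sets cover all indices, so they are at distance 3.
-/

open Function SimpleGraph

theorem Pi.isCoprime_iff {ι : Type*} {R : ι → Type*} [∀ i, CommSemiring (R i)]
    {f g : ∀ i, R i} : IsCoprime f g ↔ ∀ i, IsCoprime (f i) (g i) := by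
  refine ⟨fun h i => h.map (Pi.evalRingHom R i), fun h => ?_⟩
  choose a b hab using h
  exact ⟨a, b, funext hab⟩

theorem Ideal.span_pair_eq_top_iff_isCoprime {R : Type*} [CommSemiring R] {x y : R} :
    Ideal.span {x, y} = ⊤ ↔ IsCoprime x y := by
  rw [Ideal.eq_top_iff_one, Ideal.mem_span_pair]
  rfl

theorem RingEquiv.isCoprime_map_iff {R S : Type*} [CommSemiring R] [CommSemiring S]
    (e : R ≃+* S) {x y : R} : IsCoprime (e x) (e y) ↔ IsCoprime x y :=
  ⟨fun h => by simpa using h.map e.symm.toRingHom, fun h => h.map e.toRingHom⟩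

section ZeroSet

variable {m : ℕ} {p : Fin m → ℕ}

theorem mem_Z_iff (hcop : Pairwise (Nat.Coprime on p)) {x : ZMod (NN m p)} {i : Fin m} :
    i ∈ Z m p x ↔ ZMod.prodEquivPi p hcop x i = 0 := by
  simp only [Z, mem_filter, mem_univ, true_and, ZMod.prodEquivPi_apply]

theorem Z_eq_univ_iff (hcop : Pairwise (Nat.Coprime on p)) {x : ZMod (NN m p)} :
    Z m p x = univ ↔ x = 0 := by
  rw [← (ZMod.prodEquivPi p hcop).map_eq_zero_iff, funext_iff, eq_univ_iff_forall]
  exact forall_congr' fun _ => mem_Z_iff hcop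

theorem Z_eq_empty_iff [∀ i, Fact (p i).Prime] (hcop : Pairwise (Nat.Coprime on p))
    {x : ZMod (NN m p)} : Z m p x = ∅ ↔ IsUnit x := by
  rw [← MulEquiv.isUnit_map (ZMod.prodEquivPi p hcop), Pi.isUnit_iff,
    eq_empty_iff_forall_notMem]
  simp only [mem_Z_iff hcop, isUnit_iff_ne_zero]

theorem span_pair_eq_top_iff [∀ i, Fact (p i).Prime] (hcop : Pairwise (Nat.Coprime on p))
    {x y : ZMod (NN m p)} : Ideal.span {x, y} = ⊤ ↔ Disjoint (Z m p x) (Z m p y) := by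
  rw [Ideal.span_pair_eq_top_iff_isCoprime, ← (ZMod.prodEquivPi p hcop).isCoprime_map_iff,
    Pi.isCoprime_iff, Finset.disjoint_left]
  simp only [Semifield.isCoprime_iff, mem_Z_iff hcop, ne_eq, ← not_and_or]
  exact ⟨fun h i hx hy => h i ⟨hx, hy⟩, fun h i hxy => h hxy.1 hxy.2⟩

theorem Z_prodEquivPi_symm (hcop : Pairwise (Nat.Coprime on p)) (S : Finset (Fin m))
    (c : ∀ i, ZMod (p i)) (hc : ∀ i, c i ≠ 0) :
    Z m p ((ZMod.prodEquivPi p hcop).symm fun i => if i ∈ S then 0 else c i) = S := by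
  ext i
  rw [mem_Z_iff hcop, RingEquiv.apply_symm_apply]
  by_cases hi : i ∈ S <;> simp [hi, hc]

theorem ne_zero_and_not_isUnit_iff [∀ i, Fact (p i).Prime] (hcop : Pairwise (Nat.Coprime on p))
    {x : ZMod (NN m p)} : x ≠ 0 ∧ ¬IsUnit x ↔ (Z m p x).Nonempty ∧ Z m p x ≠ univ := by
  rw [nonempty_iff_ne_empty, ne_eq, ne_eq, ne_eq, Z_eq_univ_iff hcop, Z_eq_empty_iff hcop,
    and_comm]

end ZeroSet

theorem gdiam_eq_of_forall_edist_le {V : Type*} {G : SimpleGraph V} {d : ℕ}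
    (hle : ∀ x y, G.edist x y ≤ d) {u v : V} (hge : d ≤ G.edist u v) : gdiam G = d := by
  have hdist : ∀ x y, G.dist x y ≤ d := fun x y => ENat.toNat_le_of_le_natCast (hle x y)
  have huv : G.dist u v = d := by
    rw [SimpleGraph.dist, le_antisymm (hle u v) hge, ENat.toNat_natCast]
  have hbdd : BddAbove {k | ∃ x y, G.dist x y = k} :=
    ⟨d, by rintro _ ⟨x, y, rfl⟩; exact hdist x y⟩
  exact le_antisymm (csSup_le ⟨d, u, v, huv⟩ fun _ ⟨x, y, hk⟩ => hk ▸ hdist x y)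
    (le_csSup hbdd ⟨u, v, huv⟩)

namespace G2

section General

variable {m : ℕ} {p : Fin m → ℕ} [∀ i, Fact (p i).Prime]

theorem Z_nonempty (hcop : Pairwise (Nat.Coprime on p)) (v : Vtx m p) : (Z m p v.1).Nonempty :=
  ((ne_zero_and_not_isUnit_iff hcop).mp v.2).1

theorem Z_ne_univ (hcop : Pairwise (Nat.Coprime on p)) (v : Vtx m p) : Z m p v.1 ≠ univ :=
  ((ne_zero_and_not_isUnit_iff hcop).mp v.2).2

theorem adj_iff (hcop : Pairwise (Nat.Coprime on p)) {u v : Vtx m p} :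
    (G2 m p).Adj u v ↔ Disjoint (Z m p u.1) (Z m p v.1) := by
  refine ⟨fun h => (span_pair_eq_top_iff hcop).mp h.2,
    fun h => ⟨?_, (span_pair_eq_top_iff hcop).mpr h⟩⟩
  rintro rfl
  exact (Z_nonempty hcop u).ne_empty ((disjoint_self_iff_empty _).mp h)

theorem exists_Z_eq (hcop : Pairwise (Nat.Coprime on p)) {S : Finset (Fin m)} (hS : S.Nonempty)
    (hS' : S ≠ univ) : ∃ v : Vtx m p, Z m p v.1 = S := by
  have hZ := Z_prodEquivPi_symm hcop S 1 fun _ => one_ne_zero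
  exact ⟨⟨_, (ne_zero_and_not_isUnit_iff hcop).mpr (by rw [hZ]; exact ⟨hS, hS'⟩)⟩, hZ⟩

theorem exists_Z_eq_compl (hcop : Pairwise (Nat.Coprime on p)) (v : Vtx m p) :
    ∃ w : Vtx m p, Z m p w.1 = (Z m p v.1)ᶜ :=
  exists_Z_eq hcop (by rw [← compl_ne_univ_iff_nonempty, compl_compl]; exact Z_ne_univ hcop v)
    ((compl_ne_univ_iff_nonempty _).mpr (Z_nonempty hcop v))

theorem exists_ne_Z_eq (hcop : Pairwise (Nat.Coprime on p)) {S : Finset (Fin m)}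
    (hS : S.Nonempty) {i : Fin m} (hi : i ∉ S) (hpi : 2 < p i) :
    ∃ u v : Vtx m p, u ≠ v ∧ Z m p u.1 = S ∧ Z m p v.1 = S := by
  have : Fact (2 < p i) := ⟨hpi⟩
  have hS' : S ≠ univ := fun h => hi (h ▸ mem_univ i)
  have hZ₁ := Z_prodEquivPi_symm hcop S 1 fun _ => one_ne_zero
  have hZ₂ := Z_prodEquivPi_symm hcop S (-1) fun _ => neg_ne_zero.mpr one_ne_zero
  refine ⟨⟨_, (ne_zero_and_not_isUnit_iff hcop).mpr (by rw [hZ₁]; exact ⟨hS, hS'⟩)⟩,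
    ⟨_, (ne_zero_and_not_isUnit_iff hcop).mpr (by rw [hZ₂]; exact ⟨hS, hS'⟩)⟩,
    fun h => ?_, hZ₁, hZ₂⟩
  have := congr_fun ((ZMod.prodEquivPi p hcop).symm.injective (congr_arg Subtype.val h)) i
  simp only [hi, if_false, Pi.one_apply, Pi.neg_apply] at this
  exact ZMod.neg_one_ne_one this.symm

theorem exists_adj_adj_iff (hcop : Pairwise (Nat.Coprime on p)) {u v : Vtx m p} :
    (∃ w, (G2 m p).Adj u w ∧ (G2 m p).Adj w v) ↔ Z m p u.1 ∪ Z m p v.1 ≠ univ := by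
  simp only [adj_iff hcop]
  constructor
  · rintro ⟨w, huw, hwv⟩ hU
    have : Disjoint (Z m p w.1) (Z m p u.1 ∪ Z m p v.1) :=
      disjoint_union_right.mpr ⟨huw.symm, hwv⟩
    rw [hU] at this
    exact (Z_nonempty hcop w).ne_empty (disjoint_top.mp this)
  · intro hU
    obtain ⟨w, hw⟩ := exists_Z_eq hcop (S := (Z m p u.1 ∪ Z m p v.1)ᶜ)
      (by rwa [← compl_ne_univ_iff_nonempty, compl_compl])
      ((compl_ne_univ_iff_nonempty _).mpr ((Z_nonempty hcop u).mono subset_union_left))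
    refine ⟨w, ?_, ?_⟩ <;> rw [hw]
    exacts [disjoint_compl_right_iff.mpr subset_union_left,
      disjoint_compl_left_iff.mpr subset_union_right]

theorem edist_le_two_of_union_ne_univ (hcop : Pairwise (Nat.Coprime on p)) {u v : Vtx m p}
    (h : Z m p u.1 ∪ Z m p v.1 ≠ univ) : (G2 m p).edist u v ≤ 2 := by
  obtain ⟨w, huw, hwv⟩ := (exists_adj_adj_iff hcop).mpr h
  simpa using edist_le (.cons huw (.cons hwv .nil))

theorem edist_le_three (hcop : Pairwise (Nat.Coprime on p)) (u v : Vtx m p) :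
    (G2 m p).edist u v ≤ 3 := by
  by_cases hU : Z m p u.1 ∪ Z m p v.1 = univ
  · obtain ⟨a, ha⟩ := exists_Z_eq_compl hcop u
    obtain ⟨b, hb⟩ := exists_Z_eq_compl hcop v
    have hua : (G2 m p).Adj u a := (adj_iff hcop).mpr (ha ▸ disjoint_compl_right)
    have hab : (G2 m p).Adj a b := by
      rw [adj_iff hcop, ha, hb, disjoint_iff_inter_eq_empty, ← compl_union, hU, compl_univ]
    have hbv : (G2 m p).Adj b v := (adj_iff hcop).mpr (hb ▸ disjoint_compl_left)
    simpa using edist_le (.cons hua (.cons hab (.cons hbv .nil)))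
  · exact (edist_le_two_of_union_ne_univ hcop hU).trans (by norm_num)

theorem one_lt_edist (hcop : Pairwise (Nat.Coprime on p)) {u v : Vtx m p} (hne : u ≠ v)
    (h : ¬Disjoint (Z m p u.1) (Z m p v.1)) : 1 < (G2 m p).edist u v := by
  rw [← not_le, edist_le_one_iff_adj_or_eq, adj_iff hcop]
  tauto

theorem two_lt_edist (hcop : Pairwise (Nat.Coprime on p)) {u v : Vtx m p}
    (h : ¬Disjoint (Z m p u.1) (Z m p v.1)) (hU : Z m p u.1 ∪ Z m p v.1 = univ) :
    2 < (G2 m p).edist u v := by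
  refine two_lt_edist_iff.mpr ⟨?_, mt (adj_iff hcop).mp h, ?_⟩
  · rintro rfl
    exact Z_ne_univ hcop u (by rwa [union_self] at hU)
  · refine Set.eq_empty_of_forall_notMem fun w hw => ?_
    rw [mem_commonNeighbors] at hw
    exact (exists_adj_adj_iff hcop).mp ⟨w, hw.1, hw.2.symm⟩ hU

theorem gdiam_eq_three (hcop : Pairwise (Nat.Coprime on p)) (hm : 3 ≤ m) :
    gdiam (G2 m p) = 3 := by
  let i₀ : Fin m := ⟨0, by omega⟩
  let i₁ : Fin m := ⟨1, by omega⟩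
  let i₂ : Fin m := ⟨2, by omega⟩
  obtain ⟨u, hu⟩ := exists_Z_eq hcop (S := {i₀}ᶜ) ⟨i₁, by simp [i₀, i₁]⟩
    ((compl_ne_univ_iff_nonempty _).mpr (singleton_nonempty _))
  obtain ⟨v, hv⟩ := exists_Z_eq hcop (S := {i₁}ᶜ) ⟨i₀, by simp [i₀, i₁]⟩
    ((compl_ne_univ_iff_nonempty _).mpr (singleton_nonempty _))
  have hint : ¬Disjoint (Z m p u.1) (Z m p v.1) :=
    not_disjoint_iff.mpr ⟨i₂, by simp [hu, i₀, i₂], by simp [hv, i₁, i₂]⟩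
  have hU : Z m p u.1 ∪ Z m p v.1 = univ := by
    rw [hu, hv, ← compl_inter, singleton_inter_of_notMem (by simp [i₀, i₁]), compl_empty]
  exact gdiam_eq_of_forall_edist_le (edist_le_three hcop) (Order.add_one_le_of_lt
    (two_lt_edist hcop hint hU))

end General

section Two

variable {p : Fin 2 → ℕ} [∀ i, Fact (p i).Prime]

theorem Z_eq_zero_or_one (hcop : Pairwise (Nat.Coprime on p)) (v : Vtx 2 p) :
    Z 2 p v.1 = {0} ∨ Z 2 p v.1 = {1} := by
  have key : ∀ S : Finset (Fin 2), S.Nonempty → S ≠ univ → S = {0} ∨ S = {1} := by decide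
  exact key _ (Z_nonempty hcop v) (Z_ne_univ hcop v)

theorem adj_iff_Z_ne (hcop : Pairwise (Nat.Coprime on p)) {u v : Vtx 2 p} :
    (G2 2 p).Adj u v ↔ Z 2 p u.1 ≠ Z 2 p v.1 := by
  rw [adj_iff hcop]
  rcases Z_eq_zero_or_one hcop u with hu | hu <;> rcases Z_eq_zero_or_one hcop v with hv | hv <;>
    simp [hu, hv]

theorem adj_iff_xor_mem_XS (hcop : Pairwise (Nat.Coprime on p)) (u v : Vtx 2 p) :
    (G2 2 p).Adj u v ↔
      (u ∈ XS 2 p {0} ∧ v ∉ XS 2 p {0}) ∨ (u ∉ XS 2 p {0} ∧ v ∈ XS 2 p {0}) := by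
  rw [adj_iff_Z_ne hcop]
  rcases Z_eq_zero_or_one hcop u with hu | hu <;> rcases Z_eq_zero_or_one hcop v with hv | hv <;>
    simp [XS, hu, hv]

theorem gdiam_eq_two (hcop : Pairwise (Nat.Coprime on p)) (hp₁ : 2 < p 1) :
    gdiam (G2 2 p) = 2 := by
  obtain ⟨u, v, hne, hu, hv⟩ := exists_ne_Z_eq hcop (S := {0}) (i := 1) (singleton_nonempty _)
    (by decide) hp₁
  refine gdiam_eq_of_forall_edist_le (fun x y => ?_) (u := u) (v := v)
    (Order.add_one_le_of_lt (one_lt_edist hcop hne (by simp [hu, hv])))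
  by_cases hxy : Z 2 p x.1 = Z 2 p y.1
  · exact edist_le_two_of_union_ne_univ hcop (by rw [hxy, union_self]; exact Z_ne_univ hcop y)
  · exact (edist_le_one_iff_adj_or_eq.mpr (.inl ((adj_iff_Z_ne hcop).mpr hxy))).trans
      (by norm_num)

end Two

end G2

theorem stmt17_general (m : ℕ) (p : Fin m → ℕ) (hp : ∀ i, (p i).Prime)
    (hmono : StrictMono p) :
    (m = 2 →
      (∃ A : Set (Vtx m p), ∀ x y : Vtx m p,
        (G2 m p).Adj x y ↔ ((x ∈ A ∧ y ∉ A) ∨ (x ∉ A ∧ y ∈ A))) ∧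
      gdiam (G2 m p) = 2) ∧
    (3 ≤ m → gdiam (G2 m p) = 3) := by
  have : ∀ i, Fact (p i).Prime := fun i => ⟨hp i⟩
  have hcop : Pairwise (Nat.Coprime on p) := fun i j hij =>
    (Nat.coprime_primes (hp i) (hp j)).mpr (hmono.injective.ne hij)
  refine ⟨?_, G2.gdiam_eq_three hcop⟩
  rintro rfl
  exact ⟨⟨_, G2.adj_iff_xor_mem_XS hcop⟩,
    G2.gdiam_eq_two hcop ((hp 0).two_le.trans_lt (hmono Fin.zero_lt_one))⟩

theorem stmt17 (m : ℕ) (hm : 2 ≤ m) (p : Fin m → ℕ) (hp : ∀ i, (p i).Prime)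
    (hmono : StrictMono p) :
    (m = 2 →
      (∃ A : Set (Vtx m p), ∀ x y : Vtx m p,
        (G2 m p).Adj x y ↔ ((x ∈ A ∧ y ∉ A) ∨ (x ∉ A ∧ y ∈ A))) ∧
      gdiam (G2 m p) = 2) ∧
    (3 ≤ m → gdiam (G2 m p) = 3) :=
  stmt17_general m p hp hmono
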